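/- Let H = (V, E) be a hypergraph, k ≥ 1, and G_k its conflict graph. Let I be an independent set of G_k and let f_I be the induced partial k-coloring. Then for every triple (e, v, c) ∈ I, the edge e is happy under f_I: f_I(v) = c and no u ∈ e with u ≠ v satisfies f_I(u) = c. -/

import Mathlib

open Finset

/-- Vertices of the conflict graph: triples `(e, v, c)` with `e ∈ E`, `v ∈ e`, `1 ≤ c ≤ k`. -/
abbrev ConflictVertex {V : Type*} [DecidableEq V] (E : Finset (Finset V)) (k : ℕ) :=
  {t : Finset V × V × ℕ // t.1 ∈ E ∧ t.2.1 ∈ t.1 ∧ 1 ≤ t.2.2 ∧ t.2.2 ≤ k}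

/-- The conflict graph `G_k` of conflict-free `k`-coloring a hypergraph with edge set `E`. -/
def conflictGraph {V : Type*} [DecidableEq V] (E : Finset (Finset V)) (k : ℕ) :
    SimpleGraph (ConflictVertex E k) where
  Adj x y := x ≠ y ∧
    ((x.1.2.1 = y.1.2.1 ∧ x.1.2.2 ≠ y.1.2.2) ∨ x.1.1 = y.1.1 ∨
     (x.1.2.2 = y.1.2.2 ∧
       (({x.1.2.1, y.1.2.1} : Finset V) ⊆ x.1.1 ∨ ({x.1.2.1, y.1.2.1} : Finset V) ⊆ y.1.1)))
  symm := by
    constructor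
    rintro x y ⟨hne, h⟩
    refine ⟨hne.symm, ?_⟩
    rcases h with ⟨h1, h2⟩ | h | ⟨h1, h2⟩
    · exact Or.inl ⟨h1.symm, h2.symm⟩
    · exact Or.inr (Or.inl h.symm)
    · refine Or.inr (Or.inr ⟨h1.symm, ?_⟩)
      rwa [Finset.pair_comm, or_comm] at h2
  loopless := ⟨fun x h => h.1 rfl⟩

/-- `I` is an independent set of the simple graph `G`. -/
def IsIndepSet {α : Type*} (G : SimpleGraph α) (I : Set α) : Prop :=
  I.Pairwise fun a b => ¬ G.Adj a b

/-- A partial `k`-coloring: every assigned color lies in `{1, …, k}` (`none` plays `⊥`). -/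
def IsPartialColoring {V : Type*} (f : V → Option ℕ) (k : ℕ) : Prop :=
  ∀ v c, f v = some c → 1 ≤ c ∧ c ≤ k

/-- An edge `e` is happy under the partial coloring `f`. -/
def Happy {V : Type*} (f : V → Option ℕ) (e : Finset V) : Prop :=
  ∃ v ∈ e, f v ≠ none ∧ ∀ u ∈ e, u ≠ v → f u ≠ f v

theorem conflictGraph_adj_of_mem_of_color_eq {V : Type*} [DecidableEq V] {E : Finset (Finset V)}
    {k : ℕ} {x y : ConflictVertex E k}
    (hmem : y.1.2.1 ∈ x.1.1) (hne : y.1.2.1 ≠ x.1.2.1) (hc : x.1.2.2 = y.1.2.2) :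
    (conflictGraph E k).Adj x y := by
  have hxy : x ≠ y := by rintro rfl; exact hne rfl
  refine ⟨hxy, Or.inr (Or.inr ⟨hc, Or.inl ?_⟩)⟩
  rw [Finset.insert_subset_iff, Finset.singleton_subset_iff]
  exact ⟨x.2.2.1, hmem⟩

theorem stmt6_general {V : Type*} [DecidableEq V]
    (E : Finset (Finset V)) (k : ℕ)
    (I : Set (ConflictVertex E k)) (hI : IsIndepSet (conflictGraph E k) I)
    (f : V → Option ℕ)
    (hf : ∀ v c, f v = some c ↔ ∃ x ∈ I, x.1.2.1 = v ∧ x.1.2.2 = c) :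
    ∀ x ∈ I, f x.1.2.1 = some x.1.2.2 ∧
      ∀ u ∈ x.1.1, u ≠ x.1.2.1 → f u ≠ some x.1.2.2 := by
  intro x hx
  refine ⟨(hf _ _).2 ⟨x, hx, rfl, rfl⟩, fun u hu hne hfu => ?_⟩
  obtain ⟨y, hy, rfl, hc⟩ := (hf u _).1 hfu
  have hadj : (conflictGraph E k).Adj x y :=
    conflictGraph_adj_of_mem_of_color_eq hu hne hc.symm
  exact hI hx hy hadj.ne hadj

/-- Let `f` be the partial coloring induced by an independent set `I` of the
conflict graph. Then for every `(e, v, c) ∈ I` the edge `e` is happy under `f`: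
`f v = c` and no `u ∈ e` with `u ≠ v` has `f u = c`. -/
theorem stmt6 {V : Type*} [Fintype V] [DecidableEq V]
    (E : Finset (Finset V)) (hE : ∀ e ∈ E, e.Nonempty) (k : ℕ) (hk : 1 ≤ k)
    (I : Set (ConflictVertex E k)) (hI : IsIndepSet (conflictGraph E k) I)
    (f : V → Option ℕ)
    (hf : ∀ v c, f v = some c ↔ ∃ x ∈ I, x.1.2.1 = v ∧ x.1.2.2 = c) :
    ∀ x ∈ I, f x.1.2.1 = some x.1.2.2 ∧
      ∀ u ∈ x.1.1, u ≠ x.1.2.1 → f u ≠ some x.1.2.2 :=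
  stmt6_general E k I hI f hf
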